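/- Let A be a nonnegative n×n real matrix and e the all-ones vector in ℝⁿ. Then lim sup_{m→∞} (1/m) log ⟨e, A^m e⟩ = log r(A), where r(A) is the spectral radius, provided ⟨e, A^m e⟩ > 0 for all m (e.g., when every row and column sum of A is positive along powers). -/

import Mathlib

attribute [local instance] Matrix.linftyOpNormedRing Matrix.linftyOpNormedAlgebra

open Filter

private theorem aux_rowsum_le_norm {n : ℕ} [Nonempty (Fin n)] (M : Matrix (Fin n) (Fin n) ℝ)
    (hM : ∀ i j, 0 ≤ M i j) (i : Fin n) : (∑ j, M i j) ≤ ‖M‖ := by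
  have hrow : (∑ j, M i j) = ((∑ j, ‖M i j‖₊ : NNReal) : ℝ) := by
    push_cast
    exact Finset.sum_congr rfl fun j _ => (Real.norm_of_nonneg (hM i j)).symm
  rw [hrow, ← coe_nnnorm]
  have : (∑ j, ‖M i j‖₊) ≤ ‖M‖₊ := by
    rw [Matrix.linfty_opNNNorm_def]
    exact Finset.le_sup (f := fun i => ∑ j, ‖M i j‖₊) (Finset.mem_univ i)
  exact_mod_cast this

private theorem aux_norm_eq_rowsum {n : ℕ} [Nonempty (Fin n)] (M : Matrix (Fin n) (Fin n) ℝ)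
    (hM : ∀ i j, 0 ≤ M i j) : ∃ i, ‖M‖ = ∑ j, M i j := by
  obtain ⟨i, -, hi⟩ := Finset.exists_mem_eq_sup Finset.univ Finset.univ_nonempty
    (fun i => ∑ j, ‖M i j‖₊)
  refine ⟨i, ?_⟩
  have hrow : (∑ j, M i j) = ((∑ j, ‖M i j‖₊ : NNReal) : ℝ) := by
    push_cast
    exact Finset.sum_congr rfl fun j _ => (Real.norm_of_nonneg (hM i j)).symm
  rw [hrow, ← coe_nnnorm, Matrix.linfty_opNNNorm_def, hi]

private theorem aux_norm_le_sum {n : ℕ} [Nonempty (Fin n)] (M : Matrix (Fin n) (Fin n) ℝ)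
    (hM : ∀ i j, 0 ≤ M i j) : ‖M‖ ≤ ∑ i, ∑ j, M i j := by
  obtain ⟨i, hi⟩ := aux_norm_eq_rowsum M hM
  rw [hi]
  exact Finset.single_le_sum (f := fun i => ∑ j, M i j)
    (fun i _ => Finset.sum_nonneg fun j _ => hM i j) (Finset.mem_univ i)

private theorem aux_sum_le_card_norm {n : ℕ} [Nonempty (Fin n)] (M : Matrix (Fin n) (Fin n) ℝ)
    (hM : ∀ i j, 0 ≤ M i j) : (∑ i, ∑ j, M i j) ≤ n * ‖M‖ := by
  calc (∑ i, ∑ j, M i j) ≤ ∑ _i : Fin n, ‖M‖ :=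
        Finset.sum_le_sum fun i _ => aux_rowsum_le_norm M hM i
    _ = n * ‖M‖ := by simp

private theorem aux_isNilpotent_of_spectralRadius_eq_zero {n : ℕ}
    (B : Matrix (Fin n) (Fin n) ℂ) (h : spectralRadius ℂ B = 0) : IsNilpotent B := by
  have hspec : ∀ μ ∈ spectrum ℂ B, μ = 0 := by
    intro μ hμ
    have : (‖μ‖₊ : ENNReal) ≤ spectralRadius ℂ B :=
      le_iSup₂ (f := fun k (_ : k ∈ spectrum ℂ B) => (‖k‖₊ : ENNReal)) μ hμ
    rw [h, nonpos_iff_eq_zero] at this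
    simpa using this
  set φ := Matrix.toLinAlgEquiv' B with hφ
  have hspecφ : spectrum ℂ φ = spectrum ℂ B := AlgEquiv.spectrum_eq Matrix.toLinAlgEquiv' B
  have hroots : ∀ μ : ℂ, (minpoly ℂ φ).IsRoot μ → μ = 0 := by
    intro μ hr
    have he : Module.End.HasEigenvalue φ μ := Module.End.hasEigenvalue_iff_isRoot.2 hr
    exact hspec μ (hspecφ ▸ he.mem_spectrum)
  have hmon : (minpoly ℂ φ).Monic := minpoly.monic (LinearMap.isIntegral φ)
  have hsplit := IsAlgClosed.splits (minpoly ℂ φ)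
  have hp : minpoly ℂ φ = Polynomial.X ^ (minpoly ℂ φ).roots.card := by
    have h1 := hsplit.eq_prod_roots_of_monic hmon
    rw [h1]
    have h2 : (minpoly ℂ φ).roots = Multiset.replicate (minpoly ℂ φ).roots.card 0 := by
      apply Multiset.eq_replicate.2
      exact ⟨rfl, fun b hb => hroots b (Polynomial.isRoot_of_mem_roots hb)⟩
    rw [h2]
    simp [Multiset.map_replicate, Multiset.prod_replicate]
  have hnilφ : IsNilpotent φ := by
    refine ⟨(minpoly ℂ φ).roots.card, ?_⟩
    have := minpoly.aeval ℂ φ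
    rw [hp] at this
    rwa [map_pow, Polynomial.aeval_X] at this
  have : IsNilpotent (Matrix.toLinAlgEquiv'.symm φ) :=
    hnilφ.map (Matrix.toLinAlgEquiv'.symm : _ ≃ₐ[ℂ] _).toAlgHom
  simpa [hφ] using this

private theorem aux_map_pow {n : ℕ} (A : Matrix (Fin n) (Fin n) ℝ) (m : ℕ) :
    (A.map (fun x => (x : ℂ))) ^ m = (A ^ m).map (fun x => (x : ℂ)) := by
  have := map_pow (Complex.ofRealHom.mapMatrix (m := Fin n)) A m
  simpa [RingHom.mapMatrix_apply, Matrix.map] using this.symm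

private theorem aux_nnnorm_map {n : ℕ} (M : Matrix (Fin n) (Fin n) ℝ) :
    ‖M.map (fun x => (x : ℂ))‖₊ = ‖M‖₊ := by
  rw [Matrix.linfty_opNNNorm_def, Matrix.linfty_opNNNorm_def]
  congr 1
  funext i
  exact Finset.sum_congr rfl fun j _ => by simp [Matrix.map_apply]

/-- The spectral radius of a real matrix, computed via its complexification. -/
noncomputable def specRad {ι : Type*} [Fintype ι] [DecidableEq ι]
    (A : Matrix ι ι ℝ) : ℝ :=
  (spectralRadius ℂ (A.map (fun x => (x : ℂ)))).toReal

private theorem aux_tendsto_norm_rpow {n : ℕ} [Nonempty (Fin n)]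
    (A : Matrix (Fin n) (Fin n) ℝ) :
    Tendsto (fun m : ℕ => ‖A ^ m‖ ^ (1 / m : ℝ)) atTop (nhds (specRad A)) := by
  set B := A.map (fun x => (x : ℂ)) with hB
  have hBn : ∀ m : ℕ, ‖B ^ m‖₊ = ‖A ^ m‖₊ := fun m => by
    rw [hB, aux_map_pow, aux_nnnorm_map]
  have h1 := spectrum.pow_nnnorm_pow_one_div_tendsto_nhds_spectralRadius B
  have hfin : spectralRadius ℂ B ≠ ⊤ :=
    ((spectrum.spectralRadius_le_nnnorm (𝕜 := ℂ) B).trans_lt ENNReal.coe_lt_top).ne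
  have h2 := (ENNReal.tendsto_toReal hfin).comp h1
  have heq : (fun m : ℕ => ‖A ^ m‖ ^ (1 / m : ℝ)) =
      (ENNReal.toReal ∘ fun m : ℕ => ((‖B ^ m‖₊ : ENNReal) ^ (1 / m : ℝ))) := by
    funext m
    simp only [Function.comp_apply, ← ENNReal.toReal_rpow, ENNReal.coe_toReal, hBn m, coe_nnnorm]
  rw [heq]
  exact h2

/-- for a nonnegative matrix `A` with `⟨e, A^m e⟩ > 0` for all `m`,
`lim sup_m (1/m) log ⟨e, A^m e⟩ = log r(A)`. -/
theorem limsup_log_inner_pow_eq_log_spectralRadius {n : ℕ}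
    (A : Matrix (Fin n) (Fin n) ℝ)
    (hA : ∀ i j, 0 ≤ A i j)
    (hpos : ∀ m : ℕ, 0 < ∑ i, ∑ j, (A ^ m) i j) :
    Filter.limsup (fun m : ℕ => (1 / m : ℝ) * Real.log (∑ i, ∑ j, (A ^ m) i j))
      Filter.atTop = Real.log (specRad A) := by
  obtain hn | hn := Nat.eq_zero_or_pos n
  · exfalso
    have h0 := hpos 0
    subst hn
    simp at h0
  haveI : Nonempty (Fin n) := ⟨⟨0, hn⟩⟩
  -- entries of powers are nonnegative
  have hpow : ∀ m : ℕ, ∀ i j, 0 ≤ (A ^ m) i j := by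
    intro m
    induction m with
    | zero =>
      intro i j
      rw [pow_zero]
      by_cases h : i = j <;> simp [Matrix.one_apply, h]
    | succ k ih =>
      intro i j
      rw [pow_succ, Matrix.mul_apply]
      exact Finset.sum_nonneg fun l _ => mul_nonneg (ih i l) (hA l j)
  -- positivity of norms of powers
  have hNpos : ∀ m : ℕ, 0 < ‖A ^ m‖ := by
    intro m
    rcases (norm_nonneg (A ^ m)).lt_or_eq with h | h
    · exact h
    · exfalso
      have h1 := aux_sum_le_card_norm (A ^ m) (hpow m)
      rw [← h] at h1
      simp only [mul_zero] at h1
      linarith [hpos m]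
  have hr := aux_tendsto_norm_rpow A
  -- spectral radius is positive
  have hrpos : 0 < specRad A := by
    rcases (ENNReal.toReal_nonneg : 0 ≤ specRad A).lt_or_eq with h | h
    · exact h
    · exfalso
      have hfin : spectralRadius ℂ (A.map (fun x => (x : ℂ))) ≠ ⊤ :=
        ((spectrum.spectralRadius_le_nnnorm (𝕜 := ℂ) _).trans_lt ENNReal.coe_lt_top).ne
      have h0 : spectralRadius ℂ (A.map (fun x => (x : ℂ))) = 0 := by
        have h' : (spectralRadius ℂ (A.map (fun x => (x : ℂ)))).toReal = 0 := h.symm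
        exact (ENNReal.toReal_eq_zero_iff _).1 h' |>.resolve_right hfin
      obtain ⟨k, hk⟩ := aux_isNilpotent_of_spectralRadius_eq_zero _ h0
      rw [aux_map_pow] at hk
      have hAk : A ^ k = 0 := by
        ext i j
        have h2 : (((A ^ k) i j : ℝ) : ℂ) = 0 := by
          have := congrFun (congrFun hk i) j
          simpa [Matrix.map_apply] using this
        exact_mod_cast h2
      have h3 := hpos (k + 1)
      rw [pow_succ, hAk, Matrix.zero_mul] at h3
      simp at h3
  -- (1/m) log ‖A^m‖ → log r
  have hlog : Tendsto (fun m : ℕ => (1 / m : ℝ) * Real.log ‖A ^ m‖) atTop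
      (nhds (Real.log (specRad A))) := by
    have h1 := (Real.continuousAt_log hrpos.ne').tendsto.comp hr
    have heq : (fun m : ℕ => (1 / m : ℝ) * Real.log ‖A ^ m‖) =
        (Real.log ∘ fun m : ℕ => ‖A ^ m‖ ^ (1 / m : ℝ)) := by
      funext m
      simp [Function.comp_apply, Real.log_rpow (hNpos m)]
    rw [heq]
    exact h1
  -- upper comparison sequence tends to log r
  have hupper : Tendsto (fun m : ℕ => (1 / m : ℝ) * Real.log n
      + (1 / m : ℝ) * Real.log ‖A ^ m‖) atTop (nhds (Real.log (specRad A))) := by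
    have h0 : Tendsto (fun m : ℕ => (1 / m : ℝ) * Real.log n) atTop (nhds 0) := by
      have := tendsto_one_div_atTop_nhds_zero_nat.mul_const (Real.log n)
      simpa using this
    have := h0.add hlog
    simpa using this
  -- squeeze
  have hmain : Tendsto (fun m : ℕ => (1 / m : ℝ) * Real.log (∑ i, ∑ j, (A ^ m) i j)) atTop
      (nhds (Real.log (specRad A))) := by
    refine tendsto_of_tendsto_of_tendsto_of_le_of_le hlog hupper ?_ ?_
    · intro m
      have hinv : (0 : ℝ) ≤ 1 / m := by positivity
      exact mul_le_mul_of_nonneg_left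
        (Real.log_le_log (hNpos m) (aux_norm_le_sum (A ^ m) (hpow m))) hinv
    · intro m
      have hinv : (0 : ℝ) ≤ 1 / m := by positivity
      have h1 : Real.log (∑ i, ∑ j, (A ^ m) i j) ≤ Real.log (n * ‖A ^ m‖) :=
        Real.log_le_log (hpos m) (aux_sum_le_card_norm (A ^ m) (hpow m))
      have h2 : Real.log ((n : ℝ) * ‖A ^ m‖) = Real.log n + Real.log ‖A ^ m‖ :=
        Real.log_mul (by exact_mod_cast hn.ne') (hNpos m).ne'
      calc (1 / m : ℝ) * Real.log (∑ i, ∑ j, (A ^ m) i j)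
          ≤ (1 / m : ℝ) * (Real.log n + Real.log ‖A ^ m‖) := by
            rw [← h2]; exact mul_le_mul_of_nonneg_left h1 hinv
        _ = (1 / m : ℝ) * Real.log n + (1 / m : ℝ) * Real.log ‖A ^ m‖ := by ring
  exact hmain.limsup_eq
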